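/- arXiv:2303.07348 — 2 statements merged into one kernel-verified Lean document; each statement's English description precedes it below -/
import Mathlib

section
/- Let X be a normed ring, let r be a natural number with r ≥ 2 and p ≥ 0 a real number, and let f : 𝓘 → X satisfy ‖f‖²_{−r,−p} < ∞. Then for every n ≥ 1, every natural number s ≥ r and every real q > p + 1, the n-th Wick power f^{◊n} (defined by f^{◊1} = f and f^{◊n} = f^{◊(n−1)} ◊ f) satisfies ‖f^{◊n}‖²_{−s,−q} = ∑_{γ∈𝓘} γ! · ‖(f^{◊n})_γ‖² · ((s^{|γ|³})!)^{−1} · (2ℕ)^{−qγ} < ∞. -/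
abbrev MultiIndex : Type := ℕ →₀ ℕ

/-- `|α| = ∑ₙ αₙ` -/
def msize (α : MultiIndex) : ℕ := α.sum fun _ k => k

/-- `α! = ∏ₙ (αₙ)!` -/
def mfact (α : MultiIndex) : ℕ := α.prod fun _ k => k.factorial

/-- `(2ℕ)^{cα} = ∏ₙ (2n)^{c·αₙ}`; the index `n : ℕ` stands for the position `n+1 ≥ 1`. -/
noncomputable def wt (c : ℝ) (α : MultiIndex) : ℝ :=
  α.prod fun n k => (2 * ((n : ℝ) + 1)) ^ (c * (k : ℝ))


/-- The Wick product: `(f ◊ g)_γ = ∑_{β ≤ γ} f_β · g_{γ-β}`. -/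
noncomputable def wick {X : Type*} [NormedRing X] (f g : MultiIndex → X) :
    MultiIndex → X :=
  fun γ => ∑ p ∈ Finset.HasAntidiagonal.antidiagonal γ, f p.1 * g p.2

/-- The summand of the squared `(FS)_{-r,-p}`-norm:
`α! · ‖f_α‖² · ((r^{|α|³})!)⁻¹ · (2ℕ)^{-pα}`. -/
noncomputable def fsTerm {X : Type*} [NormedRing X] (r : ℕ) (p : ℝ)
    (f : MultiIndex → X) (α : MultiIndex) : ℝ :=
  (mfact α : ℝ) * ‖f α‖ ^ 2 * ((r ^ (msize α) ^ 3).factorial : ℝ)⁻¹ * wt (-p) α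


/-- Wick powers, shifted by one: `wickPow f n = f^{◊(n+1)}`, i.e.
`wickPow f 0 = f = f^{◊1}` and `wickPow f n = wickPow f (n-1) ◊ f = f^{◊(n+1)}`. -/
noncomputable def wickPow {X : Type*} [NormedRing X] (f : MultiIndex → X) :
    ℕ → MultiIndex → X
  | 0 => f
  | n + 1 => wick (wickPow f n) f

/-!
Write `w_{r,p}(α)` for the weight of `‖f_α‖²` in the `(FS)_{-r,-p}`-norm. Since `(g ◊ f)_γ` is a
sum over the splits `β + δ = γ`, Cauchy–Schwarz with the auxiliary weights
`c_{β,δ} = w_{s,q}(γ) / (w_{s,q}(β) w_{r,p}(δ))` bounds the `γ`-term of `‖g ◊ f‖²_{-s,-q}` by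
`(∑ c) · ∑_{β+δ=γ} (β-term of ‖g‖²_{-s,-q}) · (δ-term of ‖f‖²_{-r,-p})`. For `β, δ ≠ 0` the
factorial `(s^{(|β|+|δ|)³})!` beats `4^{|γ|} (s^{|β|³})! (r^{|δ|³})!`, which absorbs both
`γ! ≤ 2^{|γ|} β! δ!` and the number `≤ 2^{|γ|}` of splits, so `∑ c ≤ 3`. Hence `‖g ◊ f‖_{-s,-q}`
is controlled by a Cauchy product of two summable families, and induction on `n` finishes.
-/

open Finset Finset.HasAntidiagonal Nat

lemma wt_pos (c : ℝ) (α : MultiIndex) : 0 < wt c α :=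
  Finset.prod_pos fun _ _ => Real.rpow_pos_of_pos (by positivity) _

lemma wt_add (c : ℝ) (α β : MultiIndex) : wt c (α + β) = wt c α * wt c β := by
  refine Finsupp.prod_add_index' (fun _ => by simp) fun _ k l => ?_
  rw [Nat.cast_add, mul_add c, Real.rpow_add (by positivity)]

lemma wt_mono {c c' : ℝ} (h : c ≤ c') (α : MultiIndex) : wt c α ≤ wt c' α := by
  refine Finset.prod_le_prod (fun _ _ => (Real.rpow_pos_of_pos (by positivity) _).le)
    fun n _ => Real.rpow_le_rpow_of_exponent_le ?_ (by gcongr)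
  have : (0 : ℝ) ≤ n := n.cast_nonneg
  linarith

lemma msize_add (α β : MultiIndex) : msize (α + β) = msize α + msize β :=
  Finsupp.sum_add_index' (fun _ => rfl) fun _ _ _ => rfl

lemma msize_pos {α : MultiIndex} (h : α ≠ 0) : 0 < msize α := by
  obtain ⟨n, hn⟩ := Finsupp.ne_iff.1 h
  exact (Nat.pos_of_ne_zero hn).trans_le
    (Finset.single_le_sum (fun _ _ => Nat.zero_le _) (Finsupp.mem_support_iff.2 hn))

lemma factorial_add_le_two_pow_mul (a b : ℕ) : (a + b)! ≤ 2 ^ (a + b) * (a ! * b !) := by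
  rw [← add_choose_mul_factorial_mul_factorial, mul_assoc]
  exact Nat.mul_le_mul_right _ (choose_le_two_pow _ _)

lemma mfact_add_le (β δ : MultiIndex) :
    mfact (β + δ) ≤ 2 ^ msize (β + δ) * (mfact β * mfact δ) := by
  set S := (β + δ).support
  have hβ : β.support ⊆ S := Finsupp.support_mono le_self_add
  have hδ : δ.support ⊆ S := Finsupp.support_mono le_add_self
  rw [mfact, mfact, mfact, msize, Finsupp.prod_of_support_subset β hβ _ fun _ _ => rfl,
    Finsupp.prod_of_support_subset δ hδ _ fun _ _ => rfl, Finsupp.sum,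
    ← Finset.prod_pow_eq_pow_sum, Finsupp.prod, ← Finset.prod_mul_distrib,
    ← Finset.prod_mul_distrib]
  exact Finset.prod_le_prod' fun n _ => factorial_add_le_two_pow_mul (β n) (δ n)

lemma card_antidiagonal_le (γ : MultiIndex) : #(antidiagonal γ) ≤ 2 ^ msize γ := by
  calc #(antidiagonal γ) ≤ #(Iic γ) :=
        Finset.card_le_card_of_injOn Prod.fst
          (fun _ h => Finset.mem_Iic.2 (antidiagonal.fst_le h))
          fun p hp q hq h => Prod.ext h (add_left_cancel (a := p.1) (by
            rw [mem_antidiagonal.1 hp, h, mem_antidiagonal.1 hq]))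
    _ = ∏ n ∈ γ.support, (γ n + 1) := by
        rw [Finsupp.card_Iic]
        exact Finset.prod_congr rfl fun n _ => Nat.card_Iic _
    _ ≤ ∏ n ∈ γ.support, 2 ^ γ n := Finset.prod_le_prod' fun _ _ => Nat.lt_two_pow_self
    _ = 2 ^ msize γ := Finset.prod_pow_eq_pow_sum _ _ _

lemma pow_cube_add_pow_cube_add_le {a b s : ℕ} (ha : 1 ≤ a) (hb : 1 ≤ b) (hs : 2 ≤ s) :
    s ^ a ^ 3 + s ^ b ^ 3 + (a + b) ≤ s ^ (a + b) ^ 3 := by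
  have hu : 2 ≤ s ^ a ^ 3 := hs.trans (Nat.le_self_pow (by positivity) s)
  have hv : 2 ≤ s ^ b ^ 3 := hs.trans (Nat.le_self_pow (by positivity) s)
  have hw : a + b < s ^ (a + b) := Nat.lt_pow_self (by omega)
  have hexp : a ^ 3 + b ^ 3 + (a + b) ≤ (a + b) ^ 3 := by
    have : 1 ≤ a * b := Nat.one_le_iff_ne_zero.2 (by positivity)
    nlinarith
  calc s ^ a ^ 3 + s ^ b ^ 3 + (a + b) ≤ s ^ a ^ 3 * s ^ b ^ 3 * s ^ (a + b) := by
        have huv : s ^ a ^ 3 + s ^ b ^ 3 ≤ s ^ a ^ 3 * s ^ b ^ 3 := by nlinarith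
        nlinarith
    _ = s ^ (a ^ 3 + b ^ 3 + (a + b)) := by rw [← pow_add, ← pow_add]
    _ ≤ s ^ (a + b) ^ 3 := Nat.pow_le_pow_right (by omega) hexp

lemma four_pow_mul_factorial_mul_factorial_le {a b r s : ℕ} (ha : 1 ≤ a) (hb : 1 ≤ b)
    (hr : 2 ≤ r) (hrs : r ≤ s) :
    4 ^ (a + b) * ((s ^ a ^ 3)! * (r ^ b ^ 3)!) ≤ (s ^ (a + b) ^ 3)! := by
  set x := s ^ a ^ 3
  set y := s ^ b ^ 3
  have hx : 2 ≤ x := (hr.trans hrs).trans (Nat.le_self_pow (by positivity) s)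
  have hy : 1 ≤ y := Nat.one_le_pow _ _ (by omega)
  calc 4 ^ (a + b) * (x ! * (r ^ b ^ 3)!) ≤ (x + y + 1) ^ (a + b) * (x ! * y !) := by
        gcongr
        · omega
        · exact Nat.pow_le_pow_left hrs _
    _ ≤ (x + y)! * (x + y + 1) ^ (a + b) := by
        rw [mul_comm]
        exact Nat.mul_le_mul_right _ (Nat.le_of_dvd (factorial_pos _)
          (factorial_mul_factorial_dvd_factorial_add x y))
    _ ≤ (x + y + (a + b))! := factorial_mul_pow_le_factorial
    _ ≤ (s ^ (a + b) ^ 3)! := factorial_le (pow_cube_add_pow_cube_add_le ha hb (hr.trans hrs))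

noncomputable def fsWeight (r : ℕ) (p : ℝ) (α : MultiIndex) : ℝ :=
  (mfact α : ℝ) * ((r ^ msize α ^ 3)! : ℝ)⁻¹ * wt (-p) α

lemma fsTerm_eq_mul_fsWeight {X : Type*} [NormedRing X] (r : ℕ) (p : ℝ) (f : MultiIndex → X)
    (α : MultiIndex) : fsTerm r p f α = ‖f α‖ ^ 2 * fsWeight r p α := by
  unfold fsTerm fsWeight
  ring

lemma fsWeight_pos (r : ℕ) (p : ℝ) (α : MultiIndex) : 0 < fsWeight r p α := by
  have : 0 < mfact α := Finset.prod_pos fun _ _ => factorial_pos _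
  unfold fsWeight
  have := wt_pos (-p) α
  positivity

lemma fsTerm_nonneg {X : Type*} [NormedRing X] (r : ℕ) (p : ℝ) (f : MultiIndex → X)
    (α : MultiIndex) : 0 ≤ fsTerm r p f α := by
  rw [fsTerm_eq_mul_fsWeight]
  exact mul_nonneg (sq_nonneg _) (fsWeight_pos r p α).le

lemma fsWeight_zero (r : ℕ) (p : ℝ) : fsWeight r p 0 = 1 := by
  simp [fsWeight, mfact, msize, wt]

lemma fsWeight_anti {r s : ℕ} (hrs : r ≤ s) {p q : ℝ} (hpq : p ≤ q) (α : MultiIndex) :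
    fsWeight s q α ≤ fsWeight r p α := by
  unfold fsWeight
  have := wt_pos (-q) α
  gcongr
  exact wt_mono (neg_le_neg hpq) α

lemma fsTerm_anti {X : Type*} [NormedRing X] {r s : ℕ} (hrs : r ≤ s) {p q : ℝ} (hpq : p ≤ q)
    (f : MultiIndex → X) (α : MultiIndex) : fsTerm s q f α ≤ fsTerm r p f α := by
  rw [fsTerm_eq_mul_fsWeight, fsTerm_eq_mul_fsWeight]
  exact mul_le_mul_of_nonneg_left (fsWeight_anti hrs hpq α) (sq_nonneg _)

lemma card_antidiagonal_mul_fsWeight_le {r s : ℕ} (hr : 2 ≤ r) (hrs : r ≤ s) {p q : ℝ}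
    (hpq : p ≤ q) {β δ : MultiIndex} (hβ : β ≠ 0) (hδ : δ ≠ 0) :
    #(antidiagonal (β + δ)) * fsWeight s q (β + δ) ≤ fsWeight s q β * fsWeight r p δ := by
  set a := msize β
  set b := msize δ
  have hab : msize (β + δ) = a + b := msize_add β δ
  have hfact : ((4 : ℝ) ^ (a + b)) * ((s ^ (a + b) ^ 3)! : ℝ)⁻¹ ≤
      ((s ^ a ^ 3)! : ℝ)⁻¹ * ((r ^ b ^ 3)! : ℝ)⁻¹ := by
    rw [← mul_inv, ← div_eq_mul_inv, div_le_iff₀ (by positivity), mul_comm, ← div_eq_mul_inv,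
      le_div_iff₀ (by positivity)]
    exact_mod_cast four_pow_mul_factorial_mul_factorial_le (msize_pos hβ) (msize_pos hδ) hr hrs
  have hcard : (#(antidiagonal (β + δ)) : ℝ) ≤ 2 ^ (a + b) := by
    exact_mod_cast hab ▸ card_antidiagonal_le (β + δ)
  have hmfact : (mfact (β + δ) : ℝ) ≤ 2 ^ (a + b) * (mfact β * mfact δ) := by
    exact_mod_cast hab ▸ mfact_add_le β δ
  have hwt : wt (-q) (β + δ) ≤ wt (-q) β * wt (-p) δ := by
    rw [wt_add]
    exact mul_le_mul_of_nonneg_left (wt_mono (neg_le_neg hpq) δ) (wt_pos _ _).le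
  have := wt_pos (-q) (β + δ)
  have := wt_pos (-q) β
  have := wt_pos (-p) δ
  unfold fsWeight
  rw [hab]
  calc (#(antidiagonal (β + δ)) : ℝ) *
        (mfact (β + δ) * ((s ^ (a + b) ^ 3)! : ℝ)⁻¹ * wt (-q) (β + δ))
      ≤ 2 ^ (a + b) * (2 ^ (a + b) * (mfact β * mfact δ) * ((s ^ (a + b) ^ 3)! : ℝ)⁻¹ *
          (wt (-q) β * wt (-p) δ)) := by gcongr
    _ = mfact β * mfact δ * (4 ^ (a + b) * ((s ^ (a + b) ^ 3)! : ℝ)⁻¹) *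
          (wt (-q) β * wt (-p) δ) := by
        rw [show (4 : ℝ) = 2 * 2 by norm_num, mul_pow]
        ring
    _ ≤ mfact β * mfact δ * (((s ^ a ^ 3)! : ℝ)⁻¹ * ((r ^ b ^ 3)! : ℝ)⁻¹) *
          (wt (-q) β * wt (-p) δ) := by gcongr
    _ = _ := by ring

lemma fsTerm_wick_le {X : Type*} [NormedRing X] (r s : ℕ) (p q : ℝ) (g f : MultiIndex → X)
    (γ : MultiIndex) :
    fsTerm s q (wick g f) γ ≤
      (∑ x ∈ antidiagonal γ, fsWeight s q γ / (fsWeight s q x.1 * fsWeight r p x.2)) *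
        ∑ x ∈ antidiagonal γ, fsTerm s q g x.1 * fsTerm r p f x.2 := by
  set c : MultiIndex × MultiIndex → ℝ := fun x =>
    fsWeight s q γ / (fsWeight s q x.1 * fsWeight r p x.2)
  have hc : ∀ x ∈ antidiagonal γ, 0 < c x := fun x _ => by
    have := fsWeight_pos s q γ
    have := fsWeight_pos s q x.1
    have := fsWeight_pos r p x.2
    positivity
  have hnorm : ‖wick g f γ‖ ≤ ∑ x ∈ antidiagonal γ, ‖g x.1‖ * ‖f x.2‖ :=
    (norm_sum_le _ _).trans (Finset.sum_le_sum fun x _ => norm_mul_le _ _)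
  have hCS : (∑ x ∈ antidiagonal γ, ‖g x.1‖ * ‖f x.2‖) ^ 2 ≤
      (∑ x ∈ antidiagonal γ, c x) * ∑ x ∈ antidiagonal γ, (‖g x.1‖ * ‖f x.2‖) ^ 2 / c x := by
    rw [← div_le_iff₀' (Finset.sum_pos hc (nonempty_antidiagonal γ))]
    exact sq_sum_div_le_sum_sq_div _ _ hc
  have hW := fsWeight_pos s q γ
  rw [fsTerm_eq_mul_fsWeight]
  calc ‖wick g f γ‖ ^ 2 * fsWeight s q γ
      ≤ (∑ x ∈ antidiagonal γ, ‖g x.1‖ * ‖f x.2‖) ^ 2 * fsWeight s q γ := by gcongr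
    _ ≤ (∑ x ∈ antidiagonal γ, c x) *
          ∑ x ∈ antidiagonal γ, (‖g x.1‖ * ‖f x.2‖) ^ 2 / c x * fsWeight s q γ := by
        rw [← Finset.sum_mul, ← mul_assoc]
        gcongr
    _ = _ := by
        congr 1
        refine Finset.sum_congr rfl fun x _ => ?_
        have := fsWeight_pos s q x.1
        have := fsWeight_pos r p x.2
        simp only [c, fsTerm_eq_mul_fsWeight]
        field_simp

/-- The splits `(0, γ)` and `(γ, 0)` contribute at most `1` each, every other split at most
`1 / #(antidiagonal γ)`. -/
lemma sum_fsWeight_div_le_three {r s : ℕ} (hr : 2 ≤ r) (hrs : r ≤ s) {p q : ℝ} (hpq : p ≤ q)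
    (γ : MultiIndex) :
    ∑ x ∈ antidiagonal γ, fsWeight s q γ / (fsWeight s q x.1 * fsWeight r p x.2) ≤ 3 := by
  set N : ℝ := ((antidiagonal γ).card : ℝ)
  have hN : 0 < N := Nat.cast_pos.2 (nonempty_antidiagonal γ).card_pos
  have hbound : ∀ x ∈ antidiagonal γ, fsWeight s q γ / (fsWeight s q x.1 * fsWeight r p x.2) ≤
      (if x = (0, γ) then 1 else 0) + (if x = (γ, 0) then 1 else 0) + N⁻¹ := by
    rintro ⟨β, δ⟩ hx
    obtain rfl : β + δ = γ := mem_antidiagonal.1 hx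
    have hN' := inv_pos.2 hN
    by_cases hβ : β = 0
    · subst hβ
      have := (div_le_one (fsWeight_pos r p δ)).2 (fsWeight_anti hrs hpq δ)
      simp only [zero_add, fsWeight_zero, one_mul, if_true]
      split_ifs <;> linarith
    by_cases hδ : δ = 0
    · subst hδ
      simp only [add_zero, fsWeight_zero, mul_one, div_self (fsWeight_pos s q β).ne', if_true]
      split_ifs <;> linarith
    have := fsWeight_pos s q β
    have := fsWeight_pos r p δ
    have hmiddle : fsWeight s q (β + δ) / (fsWeight s q β * fsWeight r p δ) ≤ N⁻¹ := by
      rw [div_le_iff₀ (by positivity), ← div_eq_inv_mul, le_div_iff₀ hN, mul_comm]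
      exact card_antidiagonal_mul_fsWeight_le hr hrs hpq hβ hδ
    split_ifs <;> linarith
  calc _ ≤ ∑ x ∈ antidiagonal γ,
        ((if x = (0, γ) then 1 else 0) + (if x = (γ, 0) then 1 else 0) + N⁻¹) := sum_le_sum hbound
    _ = 3 := by
      norm_num [Finset.sum_add_distrib, hN.ne', N]

lemma summable_fsTerm_wick {X : Type*} [NormedRing X] {r s : ℕ} (hr : 2 ≤ r) (hrs : r ≤ s)
    {p q : ℝ} (hpq : p ≤ q) {g f : MultiIndex → X} (hg : Summable (fsTerm s q g))
    (hf : Summable (fsTerm r p f)) : Summable (fsTerm s q (wick g f)) := by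
  have hconv : Summable fun γ => ∑ x ∈ antidiagonal γ, fsTerm s q g x.1 * fsTerm r p f x.2 :=
    summable_sum_mul_antidiagonal_of_summable_mul
      (hg.mul_of_nonneg hf (fsTerm_nonneg s q g) (fsTerm_nonneg r p f))
  refine (hconv.mul_left 3).of_nonneg_of_le (fsTerm_nonneg s q _) fun γ => ?_
  exact (fsTerm_wick_le r s p q g f γ).trans (mul_le_mul_of_nonneg_right
    (sum_fsWeight_div_le_three hr hrs hpq γ)
    (sum_nonneg fun x _ => mul_nonneg (fsTerm_nonneg s q g x.1) (fsTerm_nonneg r p f x.2)))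

theorem stmt_5_general {X : Type*} [NormedRing X] (r : ℕ) (hr : 2 ≤ r) (p : ℝ)
    (f : MultiIndex → X) (hf : Summable (fsTerm r p f)) :
    ∀ n : ℕ, 1 ≤ n → ∀ s : ℕ, r ≤ s → ∀ q : ℝ, p + 1 < q →
      Summable (fsTerm s q (wickPow f (n - 1))) := by
  intro n _ s hrs q hq
  have hpq : p ≤ q := by linarith
  induction n - 1 with
  | zero => exact hf.of_nonneg_of_le (fsTerm_nonneg s q f) (fsTerm_anti hrs hpq f)
  | succ m ih => exact summable_fsTerm_wick hr hrs hpq ih hf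

theorem stmt_5 {X : Type*} [NormedRing X] (r : ℕ) (hr : 2 ≤ r) (p : ℝ) (hp : 0 ≤ p)
    (f : MultiIndex → X) (hf : Summable (fsTerm r p f)) :
    ∀ n : ℕ, 1 ≤ n → ∀ s : ℕ, r ≤ s → ∀ q : ℝ, p + 1 < q →
      Summable (fsTerm s q (wickPow f (n - 1))) :=
  stmt_5_general r hr p f hf
end

section
/- Let α ∈ 𝓘 with |α| ≥ 2 and let k be a natural number with 2 ≤ k ≤ |α|. Let p₀ ≥ 0 be real, let r₀ ≥ 2 be a natural number, and let L : 𝓘 → ℝ be a nonnegative family such that L(β) ≤ β! · (2ℕ)^{p₀β} · (r₀^{|β|³})! for every multiindex β with 1 ≤ |β| ≤ |α| − 1. Then the sum J_k(α) = ∑ L(γ¹)·L(γ²)⋯L(γᵏ), taken over all ordered k-tuples (γ¹, …, γᵏ) of nonzero multiindices with γ¹ + ⋯ + γᵏ = α, satisfies J_k(α) ≤ 2^{k·|α|} · α! · (2ℕ)^{p₀α} · (r₀^{(|α|−1)³+1})!. -/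
/-- `J_k(α) = ∑ L(γ¹)⋯L(γᵏ)` over ordered `k`-tuples of nonzero multiindices summing to `α`
(a finite sum, expressed via `finsum` over the (finite) set of such tuples). -/
noncomputable def Jsum (L : MultiIndex → ℝ) (k : ℕ) (α : MultiIndex) : ℝ :=
  ∑ᶠ γ ∈ {γ : Fin k → MultiIndex | (∀ i, γ i ≠ 0) ∧ ∑ i, γ i = α}, ∏ i, L (γ i)

/-!
Each summand is bounded uniformly. For a decomposition `γ¹ + ⋯ + γᵏ = α` into `k ≥ 2` nonzero
parts every part has size at most `|α| - 1`, so the hypothesis on `L` applies to it. Then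
`∏ γⁱ! ∣ α!` coordinatewise, `(2ℕ)^{p₀γ}` is multiplicative, and
`∏ (r₀^{|γⁱ|³})! ≤ (∑ r₀^{|γⁱ|³})! ≤ (r₀^{∑ |γⁱ|³})!`, where splitting off one part shows
`∑ |γⁱ|³ ≤ (|α| - 1)³ + 1`. Since every part lies below `α`, there are at most
`#{β ≤ α}^k ≤ (2^{|α|})^k` summands.
-/

open Finset
open scoped Nat

section Arithmetic

variable {ι : Type*}

lemma sum_le_prod_of_two_le {s : Finset ι} {f : ι → ℕ} (hf : ∀ i ∈ s, 2 ≤ f i) :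
    ∑ i ∈ s, f i ≤ ∏ i ∈ s, f i := by
  rcases s.eq_empty_or_nonempty with rfl | hs
  · simp
  induction hs using Nonempty.cons_induction with
  | singleton a => simp
  | cons a s ha hs ih =>
    rw [sum_cons, prod_cons]
    obtain ⟨j, hj⟩ := hs
    have hprod : 2 ≤ ∏ i ∈ s, f i :=
      (hf j (mem_cons_of_mem hj)).trans <|
        single_le_prod' (fun i hi => (hf i (mem_cons_of_mem hi)).trans' (by norm_num)) hj
    calc f a + ∑ i ∈ s, f i ≤ f a + ∏ i ∈ s, f i :=
          Nat.add_le_add_left (ih fun i hi => hf i (mem_cons_of_mem hi)) _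
      _ ≤ f a * ∏ i ∈ s, f i := add_le_mul (hf a (mem_cons_self a s)) hprod

lemma sum_cube_le_cube_sum (s : Finset ι) (f : ι → ℕ) :
    ∑ i ∈ s, f i ^ 3 ≤ (∑ i ∈ s, f i) ^ 3 :=
  calc ∑ i ∈ s, f i ^ 3 ≤ ∑ i ∈ s, f i * (∑ j ∈ s, f j) ^ 2 := sum_le_sum fun i hi => by
        rw [pow_succ']
        gcongr
        exact single_le_sum (fun _ _ => Nat.zero_le _) hi
    _ = (∑ i ∈ s, f i) ^ 3 := by rw [← sum_mul]; ring

lemma cube_add_cube_le {a b : ℕ} (ha : 1 ≤ a) (hb : 1 ≤ b) :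
    a ^ 3 + b ^ 3 ≤ (a + b - 1) ^ 3 + 1 := by
  obtain ⟨x, rfl⟩ := Nat.exists_eq_add_of_le ha
  obtain ⟨y, rfl⟩ := Nat.exists_eq_add_of_le hb
  have h : (1 + x + (1 + y) - 1) ^ 3 + 1 =
      (1 + x) ^ 3 + (1 + y) ^ 3 + 3 * x * y * (x + y + 2) := by
    rw [show 1 + x + (1 + y) - 1 = x + y + 1 by omega]
    ring
  omega

variable {s : Finset ι} {f : ι → ℕ}

lemma one_le_sum_erase [DecidableEq ι] (hf : ∀ i ∈ s, 1 ≤ f i) (hs : 1 < #s) {i : ι}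
    (hi : i ∈ s) :
    1 ≤ ∑ j ∈ s.erase i, f j := by
  obtain ⟨j, hj⟩ : (s.erase i).Nonempty := card_pos.1 (by rw [card_erase_of_mem hi]; omega)
  exact (hf j (mem_of_mem_erase hj)).trans (single_le_sum (fun _ _ => Nat.zero_le _) hj)

lemma le_sum_sub_one (hf : ∀ i ∈ s, 1 ≤ f i) (hs : 1 < #s) {i : ι} (hi : i ∈ s) :
    f i ≤ ∑ j ∈ s, f j - 1 := by
  classical
  have := one_le_sum_erase hf hs hi
  rw [← add_sum_erase s f hi]
  omega

lemma sum_cube_le_of_one_lt_card (hf : ∀ i ∈ s, 1 ≤ f i) (hs : 1 < #s) :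
    ∑ i ∈ s, f i ^ 3 ≤ (∑ i ∈ s, f i - 1) ^ 3 + 1 := by
  classical
  obtain ⟨i, hi⟩ : s.Nonempty := card_pos.1 (by omega)
  rw [← add_sum_erase s _ hi, ← add_sum_erase s _ hi]
  calc f i ^ 3 + ∑ j ∈ s.erase i, f j ^ 3 ≤ f i ^ 3 + (∑ j ∈ s.erase i, f j) ^ 3 :=
        Nat.add_le_add_left (sum_cube_le_cube_sum _ _) _
    _ ≤ _ := cube_add_cube_le (hf i hi) (one_le_sum_erase hf hs hi)

lemma prod_factorial_pow_le {r : ℕ} (hr : 2 ≤ r) (hf : ∀ i ∈ s, 1 ≤ f i) :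
    ∏ i ∈ s, (r ^ f i)! ≤ (r ^ ∑ i ∈ s, f i)! :=
  calc ∏ i ∈ s, (r ^ f i)! ≤ (∑ i ∈ s, r ^ f i)! :=
        Nat.le_of_dvd (Nat.factorial_pos _) (Nat.prod_factorial_dvd_factorial_sum _ _)
    _ ≤ (∏ i ∈ s, r ^ f i)! :=
        Nat.factorial_le <| sum_le_prod_of_two_le fun i hi => hr.trans (le_self_pow₀ (by omega)
          (by have := hf i hi; omega))
    _ = (r ^ ∑ i ∈ s, f i)! := by rw [prod_pow_eq_pow_sum]

lemma prod_factorial_pow_cube_le {r : ℕ} (hr : 2 ≤ r) (hf : ∀ i ∈ s, 1 ≤ f i) (hs : 1 < #s) :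
    ∏ i ∈ s, (r ^ f i ^ 3)! ≤ (r ^ ((∑ i ∈ s, f i - 1) ^ 3 + 1))! :=
  (prod_factorial_pow_le hr fun i hi => Nat.one_le_pow _ _ (hf i hi)).trans <|
    Nat.factorial_le <| Nat.pow_le_pow_right (by omega) (sum_cube_le_of_one_lt_card hf hs)

end Arithmetic

section MultiIndex

variable {ι : Type*}

lemma msize_eq_degree (α : MultiIndex) : msize α = α.degree := rfl

lemma msize_sum (s : Finset ι) (f : ι → MultiIndex) :
    msize (∑ i ∈ s, f i) = ∑ i ∈ s, msize (f i) := by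
  simp only [msize_eq_degree, map_sum]

lemma msize_eq_zero {α : MultiIndex} : msize α = 0 ↔ α = 0 := Finsupp.degree_eq_zero_iff α

lemma wt_nonneg (c : ℝ) (α : MultiIndex) : 0 ≤ wt c α :=
  prod_nonneg fun _ _ => Real.rpow_nonneg (by positivity) _

lemma wt_sum (c : ℝ) (s : Finset ι) (f : ι → MultiIndex) :
    wt c (∑ i ∈ s, f i) = ∏ i ∈ s, wt c (f i) :=
  (Finsupp.prod_finsetSum_index (fun _ => by simp) fun _ k₁ k₂ => by
    rw [Nat.cast_add, mul_add c, Real.rpow_add (by positivity)]).symm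

lemma prod_mfact_dvd_mfact_sum (s : Finset ι) (f : ι → MultiIndex) :
    ∏ i ∈ s, mfact (f i) ∣ mfact (∑ i ∈ s, f i) := by
  set U := (∑ i ∈ s, f i).support
  have hmfact : ∀ i ∈ s, mfact (f i) = ∏ n ∈ U, (f i n)! := fun i hi =>
    Finsupp.prod_of_support_subset _
      (Finsupp.support_mono (single_le_sum (f := f) (fun _ _ => zero_le) hi)) _ fun _ _ => rfl
  rw [prod_congr rfl hmfact, prod_comm]
  exact prod_dvd_prod_of_dvd _ _ fun n _ => by
    simpa only [Finsupp.finsetSum_apply] using Nat.prod_factorial_dvd_factorial_sum s (f · n)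

lemma card_Iic_le_two_pow_msize (α : MultiIndex) : #(Iic α) ≤ 2 ^ msize α := by
  rw [Finsupp.card_Iic]
  calc ∏ n ∈ α.support, #(Iic (α n)) = ∏ n ∈ α.support, (α n + 1) := by simp
    _ ≤ ∏ n ∈ α.support, 2 ^ α n := prod_le_prod' fun n _ => Nat.lt_two_pow_self
    _ = 2 ^ msize α := prod_pow_eq_pow_sum _ _ _

end MultiIndex

lemma Jsum_le_card_pow_mul {L : MultiIndex → ℝ} {k : ℕ} {α : MultiIndex} {B : ℝ} (hB : 0 ≤ B)
    (h : ∀ γ : Fin k → MultiIndex, (∀ i, γ i ≠ 0) → ∑ i, γ i = α → ∏ i, L (γ i) ≤ B) :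
    Jsum L k α ≤ #(Iic α) ^ k * B := by
  rw [Jsum]
  set S := {γ : Fin k → MultiIndex | (∀ i, γ i ≠ 0) ∧ ∑ i, γ i = α}
  have hS : S ⊆ ↑(Fintype.piFinset fun _ : Fin k => Iic α) := by
    rintro γ ⟨-, rfl⟩
    rw [Fintype.coe_piFinset]
    exact fun i _ => mem_coe.2 <| mem_Iic.2 <|
      single_le_sum (f := γ) (fun _ _ => zero_le) (mem_univ i)
  have hfin : S.Finite := (Fintype.piFinset fun _ : Fin k => Iic α).finite_toSet.subset hS
  rw [← hfin.coe_toFinset, finsum_mem_coe_finset]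
  have hcard : #hfin.toFinset ≤ #(Iic α) ^ k := by
    simpa using card_le_card (hfin.toFinset_subset.2 hS)
  calc ∑ γ ∈ hfin.toFinset, ∏ i, L (γ i) ≤ #hfin.toFinset • B :=
        sum_le_card_nsmul _ _ _ fun γ hγ => (hfin.mem_toFinset.1 hγ).elim (h γ)
    _ ≤ #(Iic α) ^ k * B := by
        rw [nsmul_eq_mul]
        gcongr
        exact_mod_cast hcard

lemma prod_le_of_nonzero_sum_eq {ι : Type*} [Fintype ι] (hι : 1 < Fintype.card ι) {p₀ : ℝ} {r₀ : ℕ}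
    (hr₀ : 2 ≤ r₀) {L : MultiIndex → ℝ} (hL0 : ∀ β, 0 ≤ L β) {α : MultiIndex}
    (hL : ∀ β : MultiIndex, 1 ≤ msize β → msize β ≤ msize α - 1 →
      L β ≤ (mfact β : ℝ) * wt p₀ β * ((r₀ ^ (msize β) ^ 3)! : ℝ))
    {γ : ι → MultiIndex} (hγ : ∀ i, γ i ≠ 0) (hsum : ∑ i, γ i = α) :
    ∏ i, L (γ i) ≤ (mfact α : ℝ) * wt p₀ α * ((r₀ ^ ((msize α - 1) ^ 3 + 1))! : ℝ) := by
  have hsize : ∀ i ∈ univ, 1 ≤ msize (γ i) := fun i _ =>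
    Nat.one_le_iff_ne_zero.2 fun h => hγ i (msize_eq_zero.1 h)
  have hmsize : ∑ i, msize (γ i) = msize α := by rw [← msize_sum, hsum]
  have hmfact : ∏ i, mfact (γ i) ≤ mfact α :=
    Nat.le_of_dvd (prod_pos fun _ _ => Nat.factorial_pos _)
      (hsum ▸ prod_mfact_dvd_mfact_sum _ _)
  have hfact : ∏ i, (r₀ ^ msize (γ i) ^ 3)! ≤ (r₀ ^ ((msize α - 1) ^ 3 + 1))! :=
    hmsize ▸ prod_factorial_pow_cube_le hr₀ hsize hι
  calc ∏ i, L (γ i)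
      ≤ ∏ i, ((mfact (γ i) : ℝ) * wt p₀ (γ i) * ((r₀ ^ msize (γ i) ^ 3)! : ℝ)) :=
        prod_le_prod (fun i _ => hL0 _) fun i hi =>
          hL _ (hsize i hi) (hmsize ▸ le_sum_sub_one hsize hι hi)
    _ = (∏ i, mfact (γ i) : ℕ) * wt p₀ α * (∏ i, (r₀ ^ msize (γ i) ^ 3)! : ℕ) := by
        rw [← hsum, wt_sum, prod_mul_distrib, prod_mul_distrib]
        push_cast
        rfl
    _ ≤ (mfact α : ℝ) * wt p₀ α * ((r₀ ^ ((msize α - 1) ^ 3 + 1))! : ℝ) := by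
        have := wt_nonneg p₀ α
        gcongr

theorem stmt_12_general (α : MultiIndex) (k : ℕ) (hk2 : 2 ≤ k)
    (p₀ : ℝ) (r₀ : ℕ) (hr₀ : 2 ≤ r₀)
    (L : MultiIndex → ℝ) (hL0 : ∀ β, 0 ≤ L β)
    (hL : ∀ β : MultiIndex, 1 ≤ msize β → msize β ≤ msize α - 1 →
      L β ≤ (mfact β : ℝ) * wt p₀ β * ((r₀ ^ (msize β) ^ 3).factorial : ℝ)) :
    Jsum L k α ≤ 2 ^ (k * msize α) * (mfact α : ℝ) * wt p₀ α *
      ((r₀ ^ ((msize α - 1) ^ 3 + 1)).factorial : ℝ) := by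
  have hk : 1 < Fintype.card (Fin k) := by rw [Fintype.card_fin]; omega
  have := wt_nonneg p₀ α
  calc Jsum L k α
      ≤ #(Iic α) ^ k * ((mfact α : ℝ) * wt p₀ α * ((r₀ ^ ((msize α - 1) ^ 3 + 1))! : ℝ)) :=
        Jsum_le_card_pow_mul (by positivity) fun γ hγ hsum =>
          prod_le_of_nonzero_sum_eq hk hr₀ hL0 hL hγ hsum
    _ ≤ (2 ^ msize α) ^ k *
          ((mfact α : ℝ) * wt p₀ α * ((r₀ ^ ((msize α - 1) ^ 3 + 1))! : ℝ)) := by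
        gcongr
        exact_mod_cast card_Iic_le_two_pow_msize α
    _ = _ := by ring

theorem stmt_12 (α : MultiIndex) (hα : 2 ≤ msize α) (k : ℕ) (hk2 : 2 ≤ k)
    (hkα : k ≤ msize α) (p₀ : ℝ) (hp₀ : 0 ≤ p₀) (r₀ : ℕ) (hr₀ : 2 ≤ r₀)
    (L : MultiIndex → ℝ) (hL0 : ∀ β, 0 ≤ L β)
    (hL : ∀ β : MultiIndex, 1 ≤ msize β → msize β ≤ msize α - 1 →
      L β ≤ (mfact β : ℝ) * wt p₀ β * ((r₀ ^ (msize β) ^ 3).factorial : ℝ)) :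
    Jsum L k α ≤ 2 ^ (k * msize α) * (mfact α : ℝ) * wt p₀ α *
      ((r₀ ^ ((msize α - 1) ^ 3 + 1)).factorial : ℝ) :=
  stmt_12_general α k hk2 p₀ r₀ hr₀ L hL0 hL
end
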